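/- arXiv:2205.05340 — 3 statements merged into one kernel-verified Lean document; each statement's English description precedes it below -/
import Mathlib

section
/- Under the dilations D_λ(t,x) = (λ²t, D⁰_λ x) with D⁰_λ = diag(λ I_{p₀}, λ³ I_{p₁}, …, λ^{2r+1} I_{p_r}), and B a matrix in Kolmogorov block form with null *-blocks, one has D⁰_λ e^{δB} x = e^{δλ²B} D⁰_λ x for all x ∈ ℝ^d, δ, λ ∈ ℝ; consequently D_λ e^{δY}(z) = e^{δλ²Y}(D_λ z) for all z ∈ ℝ^{d+1}. -/
/-!
`D⁰_λ` is the diagonal matrix `λ • diag ((λ²) ^ w i)`, and since `B` maps each block into the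
next one, conjugating `B` by `diag (c ^ w i)` multiplies it by `c`. Hence
`D⁰_λ (δ B) = (δ λ² B) D⁰_λ`, and such an intertwining relation passes termwise to the
exponential series.
-/

/-- Spatial dilation `D⁰_λ`: the coordinate `x_i`, lying in the block of index `w i`,
is scaled by `λ^(2 (w i) + 1)`. -/
def dil0 {d : ℕ} (w : Fin d → ℕ) (lam : ℝ) (x : Fin d → ℝ) : Fin d → ℝ :=
  fun i => lam ^ (2 * w i + 1) * x i

/-- Full dilation `D_λ(t,x) = (λ² t, D⁰_λ x)`. -/
def dil {d : ℕ} (w : Fin d → ℕ) (lam : ℝ) (z : ℝ × (Fin d → ℝ)) : ℝ × (Fin d → ℝ) :=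
  (lam ^ 2 * z.1, dil0 w lam z.2)

/-- The flow of `Y`: `e^{δY}(t,x) = (t+δ, e^{δB}x)`. -/
noncomputable def flowY {d : ℕ} (B : Matrix (Fin d) (Fin d) ℝ)
    (δ : ℝ) (z : ℝ × (Fin d → ℝ)) : ℝ × (Fin d → ℝ) :=
  (z.1 + δ, (NormedSpace.exp (δ • B)).mulVec z.2)

open Matrix NormedSpace

theorem Matrix.semiconjBy_exp {m : Type*} [Fintype m] [DecidableEq m] {D A C : Matrix m m ℝ}
    (h : SemiconjBy D A C) : SemiconjBy D (exp A) (exp C) :=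
  open scoped Norms.Operator in h.exp_right

theorem Matrix.semiconjBy_diagonal_pow_of_weight_succ {n R : Type*} [Fintype n] [DecidableEq n]
    [CommSemiring R] (w : n → ℕ) {B : Matrix n n R} (hB : ∀ i j, B i j ≠ 0 → w i = w j + 1)
    (c : R) : SemiconjBy (diagonal fun i => c ^ w i) B (c • B) := by
  ext i j
  simp only [diagonal_mul, mul_diagonal, smul_apply, smul_eq_mul]
  by_cases hij : B i j = 0
  · simp [hij]
  · rw [hB i j hij, pow_succ]
    ring

theorem dil0_eq_diagonal_mulVec {d : ℕ} (w : Fin d → ℕ) (lam : ℝ) (x : Fin d → ℝ) :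
    dil0 w lam x = (lam • diagonal fun i => (lam ^ 2) ^ w i) *ᵥ x := by
  ext i
  simp only [dil0, smul_mulVec, mulVec_diagonal, Pi.smul_apply, smul_eq_mul]
  ring

theorem dil0_exp_smul_mulVec {d : ℕ} (w : Fin d → ℕ) {B : Matrix (Fin d) (Fin d) ℝ}
    (hB : ∀ i j, B i j ≠ 0 → w i = w j + 1) (x : Fin d → ℝ) (δ lam : ℝ) :
    dil0 w lam (exp (δ • B) *ᵥ x) = exp ((δ * lam ^ 2) • B) *ᵥ dil0 w lam x := by
  have hconj : SemiconjBy (lam • diagonal fun i => (lam ^ 2) ^ w i) (δ • B)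
      ((δ * lam ^ 2) • B) := by
    rw [mul_smul]
    exact ((semiconjBy_diagonal_pow_of_weight_succ w hB _).smul_right δ).smul_left lam
  rw [dil0_eq_diagonal_mulVec, dil0_eq_diagonal_mulVec, mulVec_mulVec, mulVec_mulVec,
    (semiconjBy_exp hconj).eq]

theorem dil_flowY {d : ℕ} (w : Fin d → ℕ) {B : Matrix (Fin d) (Fin d) ℝ}
    (hB : ∀ i j, B i j ≠ 0 → w i = w j + 1) (z : ℝ × (Fin d → ℝ)) (δ lam : ℝ) :
    dil w lam (flowY B δ z) = flowY B (δ * lam ^ 2) (dil w lam z) := by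
  refine Prod.ext ?_ (dil0_exp_smul_mulVec w hB z.2 δ lam)
  simp only [dil, flowY]
  ring

/-- For `B` in Kolmogorov block form with null `*`-blocks (encoded by a block-index
function `w`: the entry `B i j` can be nonzero only if coordinate `i` lies in the block
following that of `j`), one has `D⁰_λ e^{δB} x = e^{δλ²B} D⁰_λ x`, and consequently
`D_λ e^{δY}(z) = e^{δλ²Y}(D_λ z)`. -/
theorem stmt4 {d : ℕ} (w : Fin d → ℕ) (B : Matrix (Fin d) (Fin d) ℝ)
    (hB : ∀ i j, B i j ≠ 0 → w i = w j + 1) :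
    (∀ (x : Fin d → ℝ) (δ lam : ℝ),
      dil0 w lam ((NormedSpace.exp (δ • B)).mulVec x)
        = (NormedSpace.exp ((δ * lam ^ 2) • B)).mulVec (dil0 w lam x)) ∧
    (∀ (z : ℝ × (Fin d → ℝ)) (δ lam : ℝ),
      dil w lam (flowY B δ z) = flowY B (δ * lam ^ 2) (dil w lam z)) :=
  ⟨dil0_exp_smul_mulVec w hB, dil_flowY w hB⟩
end

section
/- Commutator identity for the Taylor vector fields: fix z = (t,x), ζ = (s,ξ) ∈ ℝ^{d+1}, set v = x − e^{(t−s)B}ξ and X_i = ⟨v^{[i]}, ∇_ξ⟩ where v^{[i]} is the projection of v onto the i-th coordinate block. Then for smooth u, Y_z (X_i u)(ζ) = ⟨B v^{[i−1]}, ∇_ξ u(ζ)⟩ = [X_{i−1}, Y_ζ]u(ζ), where Y_ζ = ⟨Bξ, ∇_ξ⟩ + ∂_s and Y_z = ⟨Bx, ∇_x⟩ + ∂_t. -/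
attribute [local instance] Matrix.linftyOpNormedAddCommGroup Matrix.linftyOpNormedRing
  Matrix.linftyOpNormedAlgebra

/-- Projection of `v ∈ ℝ^d` onto the coordinate block of index `i` (block indices are
given by the weight function `w`). -/
def proj {d : ℕ} (w : Fin d → ℕ) (i : ℕ) (v : Fin d → ℝ) : Fin d → ℝ :=
  fun k => if w k = i then v k else 0

/-- `proj` as a continuous linear map. -/
noncomputable def projL {d : ℕ} (w : Fin d → ℕ) (i : ℕ) : (Fin d → ℝ) →L[ℝ] (Fin d → ℝ) :=
  LinearMap.toContinuousLinearMap
    { toFun := proj w i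
      map_add' := by intro x y; funext k; simp only [proj, Pi.add_apply]; split <;> simp
      map_smul' := by intro c x; funext k; simp only [proj, Pi.smul_apply, RingHom.id_apply]
                      split <;> simp }

/-- `M ↦ M.mulVec x` as a continuous linear map. -/
noncomputable def mulVecL {d : ℕ} (x : Fin d → ℝ) :
    Matrix (Fin d) (Fin d) ℝ →L[ℝ] (Fin d → ℝ) :=
  LinearMap.toContinuousLinearMap
    { toFun := fun M => M.mulVec x
      map_add' := fun M N => Matrix.add_mulVec M N x
      map_smul' := fun c M => Matrix.smul_mulVec c M x }

lemma proj_mulVec {d : ℕ} (w : Fin d → ℕ) (B : Matrix (Fin d) (Fin d) ℝ)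
    (hB : ∀ i j, B i j ≠ 0 → w i = w j + 1) (i : ℕ) (hi : 1 ≤ i) (v : Fin d → ℝ) :
    proj w i (B.mulVec v) = B.mulVec (proj w (i - 1) v) := by
  funext k
  simp only [proj, Matrix.mulVec, dotProduct]
  split
  · rename_i h
    refine Finset.sum_congr rfl fun j _ => ?_
    by_cases hBj : B k j = 0
    · simp [hBj]
    · have hw := hB k j hBj
      have : w j = i - 1 := by omega
      simp [proj, this]
  · rename_i h
    symm
    refine Finset.sum_eq_zero fun j _ => ?_
    by_cases hBj : B k j = 0
    · simp [hBj]
    · have hw := hB k j hBj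
      have : w j ≠ i - 1 := by intro hwj; apply h; omega
      simp [proj, this]

/-- Commutator identity for the Taylor vector fields: with `v = x − e^{(t−s)B}ξ` and
`X_i = ⟨v^{[i]}, ∇_ξ⟩`, for smooth `u` one has
`Y_z (X_i u)(ζ) = ⟨B v^{[i−1]}, ∇_ξ u(ζ)⟩ = [X_{i−1}, Y_ζ] u(ζ)`. -/
theorem stmt12 {d : ℕ} (w : Fin d → ℕ) (B : Matrix (Fin d) (Fin d) ℝ)
    (hB : ∀ i j, B i j ≠ 0 → w i = w j + 1)
    (u : ℝ × (Fin d → ℝ) → ℝ) (hu : ContDiff ℝ (⊤ : ℕ∞) u)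
    (i : ℕ) (hi : 1 ≤ i) (z ζ : ℝ × (Fin d → ℝ)) :
    (deriv (fun δ : ℝ =>
        fderiv ℝ u ζ ((0 : ℝ), proj w i ((flowY B δ z).2 -
          (NormedSpace.exp (((flowY B δ z).1 - ζ.1) • B)).mulVec ζ.2))) 0
      = fderiv ℝ u ζ ((0 : ℝ),
          B.mulVec (proj w (i - 1)
            (z.2 - (NormedSpace.exp ((z.1 - ζ.1) • B)).mulVec ζ.2)))) ∧
    (fderiv ℝ u ζ ((0 : ℝ),
        B.mulVec (proj w (i - 1)
          (z.2 - (NormedSpace.exp ((z.1 - ζ.1) • B)).mulVec ζ.2)))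
      = fderiv ℝ (fun ζ' => fderiv ℝ u ζ' ((1 : ℝ), B.mulVec ζ'.2)) ζ
          ((0 : ℝ), proj w (i - 1)
            (z.2 - (NormedSpace.exp ((z.1 - ζ.1) • B)).mulVec ζ.2))
        - fderiv ℝ (fun ζ' => fderiv ℝ u ζ'
            ((0 : ℝ), proj w (i - 1)
              (z.2 - (NormedSpace.exp ((z.1 - ζ.1) • B)).mulVec ζ.2))) ζ
            ((1 : ℝ), B.mulVec ζ.2)) := by
  constructor
  · -- Part 1
    set c : ℝ := z.1 - ζ.1 with hc
    set v : Fin d → ℝ := z.2 - (NormedSpace.exp (c • B)).mulVec ζ.2 with hv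
    -- the outer continuous linear map
    set K : (Fin d → ℝ) →L[ℝ] ℝ :=
      (fderiv ℝ u ζ).comp ((ContinuousLinearMap.inr ℝ ℝ (Fin d → ℝ)).comp (projL w i)) with hK
    -- derivative of the two exponential factors
    have h1 : HasDerivAt (fun δ : ℝ => NormedSpace.exp (δ • B)) B 0 := by
      have := hasDerivAt_exp_smul_const (𝕂 := ℝ) B 0
      simp at this
      exact this
    have h2 : HasDerivAt (fun δ : ℝ => NormedSpace.exp ((z.1 + δ - ζ.1) • B))
        (NormedSpace.exp (c • B) * B) 0 := by
      have hg : HasDerivAt (fun δ : ℝ => z.1 + δ - ζ.1) 1 0 := by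
        simpa using (((hasDerivAt_id (0:ℝ)).const_add z.1).sub_const ζ.1)
      have hf : HasDerivAt (fun t : ℝ => NormedSpace.exp (t • B))
          (NormedSpace.exp (c • B) * B) ((fun δ : ℝ => z.1 + δ - ζ.1) 0) := by
        have := hasDerivAt_exp_smul_const (𝕂 := ℝ) B c
        simp [hc] at this ⊢
        exact this
      have := hf.scomp (0:ℝ) hg
      rw [one_smul] at this
      exact this
    -- derivative of E
    have hE : HasDerivAt (fun δ : ℝ => (NormedSpace.exp (δ • B)).mulVec z.2 -
        (NormedSpace.exp ((z.1 + δ - ζ.1) • B)).mulVec ζ.2)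
        (B.mulVec z.2 - (NormedSpace.exp (c • B) * B).mulVec ζ.2) 0 := by
      exact ((mulVecL z.2).hasFDerivAt.comp_hasDerivAt 0 h1).sub
        ((mulVecL ζ.2).hasFDerivAt.comp_hasDerivAt 0 h2)
    have hF : HasDerivAt (fun δ : ℝ => K ((NormedSpace.exp (δ • B)).mulVec z.2 -
        (NormedSpace.exp ((z.1 + δ - ζ.1) • B)).mulVec ζ.2))
        (K (B.mulVec z.2 - (NormedSpace.exp (c • B) * B).mulVec ζ.2)) 0 :=
      K.hasFDerivAt.comp_hasDerivAt 0 hE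
    have heq : (fun δ : ℝ =>
        fderiv ℝ u ζ ((0 : ℝ), proj w i ((flowY B δ z).2 -
          (NormedSpace.exp (((flowY B δ z).1 - ζ.1) • B)).mulVec ζ.2)))
        = fun δ : ℝ => K ((NormedSpace.exp (δ • B)).mulVec z.2 -
          (NormedSpace.exp ((z.1 + δ - ζ.1) • B)).mulVec ζ.2) := rfl
    rw [heq, hF.deriv]
    -- now simplify the argument
    have hcomm : NormedSpace.exp (c • B) * B = B * NormedSpace.exp (c • B) :=
      (((Commute.refl B).smul_right c).exp_right).symm.eq
    have harg : B.mulVec z.2 - (NormedSpace.exp (c • B) * B).mulVec ζ.2 = B.mulVec v := by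
      rw [hcomm, ← Matrix.mulVec_mulVec, hv, Matrix.mulVec_sub]
    rw [hK]
    simp only [ContinuousLinearMap.comp_apply, ContinuousLinearMap.inr_apply]
    rw [harg]
    have : projL w i (B.mulVec v) = proj w i (B.mulVec v) := rfl
    rw [this, proj_mulVec w B hB i hi v]
  · -- Part 2
    set a : Fin d → ℝ :=
      proj w (i - 1) (z.2 - (NormedSpace.exp ((z.1 - ζ.1) • B)).mulVec ζ.2) with ha
    -- B.mulVec as CLM
    set mB : (Fin d → ℝ) →L[ℝ] (Fin d → ℝ) := LinearMap.toContinuousLinearMap B.mulVecLin with hmB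
    set m : (ℝ × (Fin d → ℝ)) →L[ℝ] (ℝ × (Fin d → ℝ)) :=
      ContinuousLinearMap.prod 0 (mB.comp (ContinuousLinearMap.snd ℝ ℝ (Fin d → ℝ))) with hm
    have hudiff : Differentiable ℝ u := hu.differentiable (by simp)
    have hf' : ∀ y, HasFDerivAt u (fderiv ℝ u y) y := fun y => (hudiff y).hasFDerivAt
    have hf'd : DifferentiableAt ℝ (fderiv ℝ u) ζ :=
      ((hu.fderiv_right (m := (⊤ : ℕ∞)) (by simp)).differentiable (by simp)) ζ
    set f'' := fderiv ℝ (fderiv ℝ u) ζ with hf''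
    have hx : HasFDerivAt (fderiv ℝ u) f'' ζ := hf'd.hasFDerivAt
    have hsymm : ∀ p q, f'' p q = f'' q p := second_derivative_symmetric hf' hx
    -- g ζ' = (1, B.mulVec ζ'.2)
    have hg : HasFDerivAt (fun ζ' : ℝ × (Fin d → ℝ) => ((1 : ℝ), B.mulVec ζ'.2)) m ζ := by
      exact (hasFDerivAt_const (1:ℝ) ζ).prodMk
        ((mB.comp (ContinuousLinearMap.snd ℝ ℝ (Fin d → ℝ))).hasFDerivAt)
    -- first term
    have hT1 : fderiv ℝ (fun ζ' => fderiv ℝ u ζ' ((1 : ℝ), B.mulVec ζ'.2)) ζ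
        = (fderiv ℝ u ζ).comp m + f''.flip ((1 : ℝ), B.mulVec ζ.2) := by
      exact (hx.clm_apply hg).fderiv
    have hT2 : fderiv ℝ (fun ζ' => fderiv ℝ u ζ' ((0 : ℝ), a)) ζ
        = (fderiv ℝ u ζ).comp (0 : (ℝ × (Fin d → ℝ)) →L[ℝ] (ℝ × (Fin d → ℝ))) + f''.flip ((0 : ℝ), a) := by
      exact (hx.clm_apply (hasFDerivAt_const ((0:ℝ), a) ζ)).fderiv
    rw [hT1, hT2]
    simp only [ContinuousLinearMap.add_apply, ContinuousLinearMap.coe_comp', Function.comp_apply,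
      ContinuousLinearMap.flip_apply, ContinuousLinearMap.zero_apply,
      ContinuousLinearMap.comp_zero, map_zero]
    have hma : m ((0 : ℝ), a) = ((0 : ℝ), B.mulVec a) := by
      simp [hm, hmB]
    rw [hma, hsymm ((0:ℝ), a) ((1:ℝ), B.mulVec ζ.2)]
    ring
end

section
/- Base case of the Taylor derivative lemma: for u ∈ C^{2,α}_B, Y_z T_2 u(ζ, z) = Yu(ζ) = T_0(Yu)(ζ, z), where T_2 u(ζ,z) = u(ζ) + ⟨∇_{(1..p₀)}u(ζ), (x−e^{(t−s)B}ξ)_{(1..p₀)}⟩ + ½ Σ_{i,j≤p₀} ∂_{ij}u(ζ)(x−e^{(t−s)B}ξ)_i(x−e^{(t−s)B}ξ)_j + Yu(ζ)(t−s). -/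
/-- The vector field `Y = ⟨Bx, ∇⟩ + ∂ₜ` as a differential operator. -/
noncomputable def Yop {d : ℕ} (B : Matrix (Fin d) (Fin d) ℝ)
    (u : ℝ × (Fin d → ℝ) → ℝ) : ℝ × (Fin d → ℝ) → ℝ :=
  fun z => fderiv ℝ u z ((1 : ℝ), B.mulVec z.2)

/-- The partial derivative `∂_{x_i}` as a differential operator. -/
noncomputable def Dxop {d : ℕ} (i : Fin d)
    (u : ℝ × (Fin d → ℝ) → ℝ) : ℝ × (Fin d → ℝ) → ℝ :=
  fun z => fderiv ℝ u z ((0 : ℝ), (Pi.single i 1 : Fin d → ℝ))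

/-- `x − e^{(t−s)B} ξ`, for `z = (t,x)`, `ζ = (s,ξ)`. -/
noncomputable def vB {d : ℕ} (B : Matrix (Fin d) (Fin d) ℝ)
    (ζ z : ℝ × (Fin d → ℝ)) : Fin d → ℝ :=
  z.2 - (NormedSpace.exp ((z.1 - ζ.1) • B)).mulVec ζ.2

/-- The second-order intrinsic Taylor polynomial
`T₂ u(ζ,z) = u(ζ) + ⟨∇_{(1..p₀)}u(ζ), v⟩ + ½ Σ_{i,j ≤ p₀} ∂_{ij}u(ζ) vᵢ vⱼ + Yu(ζ)(t−s)`,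
where `v = x − e^{(t−s)B}ξ` and the first block (`i ≤ p₀`) is `{i : w i = 0}`. -/
noncomputable def T2 {d : ℕ} (w : Fin d → ℕ) (B : Matrix (Fin d) (Fin d) ℝ)
    (u : ℝ × (Fin d → ℝ) → ℝ) (ζ z : ℝ × (Fin d → ℝ)) : ℝ :=
  u ζ + (∑ i : Fin d, if w i = 0 then Dxop i u ζ * vB B ζ z i else 0)
    + (1 / 2) * (∑ i : Fin d, ∑ j : Fin d,
        if w i = 0 ∧ w j = 0 then Dxop i (Dxop j u) ζ * vB B ζ z i * vB B ζ z j else 0)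
    + Yop B u ζ * (z.1 - ζ.1)

/-- Base case of the Taylor derivative lemma: `Y_z T₂ u(ζ, z) = Yu(ζ) = T₀(Yu)(ζ, z)`. -/
theorem stmt15 {d : ℕ} (w : Fin d → ℕ) (B : Matrix (Fin d) (Fin d) ℝ)
    (hB : ∀ i j, B i j ≠ 0 → w i = w j + 1)
    (u : ℝ × (Fin d → ℝ) → ℝ) (hu : ContDiff ℝ (⊤ : ℕ∞) u)
    (z ζ : ℝ × (Fin d → ℝ)) :
    deriv (fun δ : ℝ => T2 w B u ζ (flowY B δ z)) 0 = Yop B u ζ := by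
  classical
  letI : SeminormedRing (Matrix (Fin d) (Fin d) ℝ) := Matrix.linftyOpSemiNormedRing
  letI : NormedRing (Matrix (Fin d) (Fin d) ℝ) := Matrix.linftyOpNormedRing
  letI : NormedAlgebra ℝ (Matrix (Fin d) (Fin d) ℝ) := Matrix.linftyOpNormedAlgebra
  set c := z.1 - ζ.1 with hc
  set v₀ := vB B ζ z with hv₀
  -- mulVec as a continuous linear map in the matrix argument
  have hLex : ∀ v : Fin d → ℝ, ∃ L : Matrix (Fin d) (Fin d) ℝ →L[ℝ] (Fin d → ℝ),
      ∀ M, L M = M.mulVec v := by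
    intro v
    refine ⟨LinearMap.toContinuousLinearMap
      { toFun := fun M => M.mulVec v
        map_add' := fun A C => Matrix.add_mulVec A C v
        map_smul' := fun r A => Matrix.smul_mulVec r A v }, fun M => rfl⟩
  obtain ⟨L1, hL1⟩ := hLex z.2
  obtain ⟨L2, hL2⟩ := hLex ζ.2
  -- derivative of δ ↦ exp(δ•B) at 0
  have h1 : HasDerivAt (fun δ : ℝ => NormedSpace.exp (δ • B)) B 0 := by
    have := hasDerivAt_exp_smul_const' (𝕂 := ℝ) B 0
    simp at this
    exact this
  -- derivative of δ ↦ exp((c+δ)•B) at 0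
  have h2 : HasDerivAt (fun δ : ℝ => NormedSpace.exp ((c + δ) • B))
      (B * NormedSpace.exp (c • B)) 0 := by
    have hg : HasDerivAt (fun δ : ℝ => c + δ) 1 0 := (hasDerivAt_id 0).const_add c
    have hf := hasDerivAt_exp_smul_const' (𝕂 := ℝ) B (c + 0)
    have := HasDerivAt.scomp (x := (0 : ℝ)) hf hg
    simp only [Function.comp_def, add_zero, one_smul] at this
    exact this
  -- derivative of F δ = vB B ζ (flowY B δ z)
  set F : ℝ → (Fin d → ℝ) := fun δ => vB B ζ (flowY B δ z) with hF
  have hFeq : F = fun δ => L1 (NormedSpace.exp (δ • B))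
      - L2 (NormedSpace.exp ((c + δ) • B)) := by
    funext δ
    simp only [hF, vB, flowY, hL1, hL2]
    congr 2
    congr 2
    rw [hc]
    ring
  have hderF : HasDerivAt F (B.mulVec v₀) 0 := by
    rw [hFeq]
    have hA : HasDerivAt (fun δ : ℝ => L1 (NormedSpace.exp (δ • B))) (L1 B) 0 :=
      L1.hasFDerivAt.comp_hasDerivAt 0 h1
    have hC : HasDerivAt (fun δ : ℝ => L2 (NormedSpace.exp ((c + δ) • B)))
        (L2 (B * NormedSpace.exp (c • B))) 0 :=
      L2.hasFDerivAt.comp_hasDerivAt 0 h2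
    have := hA.sub hC
    have heq : L1 B - L2 (B * NormedSpace.exp (c • B)) = B.mulVec v₀ := by
      rw [hL1, hL2, hv₀]
      simp only [vB, ← hc]
      rw [← Matrix.mulVec_mulVec, ← Matrix.mulVec_sub]
    rwa [heq] at this
  have hFi : ∀ i : Fin d, HasDerivAt (fun δ => F δ i) (B.mulVec v₀ i) 0 := fun i =>
    (ContinuousLinearMap.proj (R := ℝ) (φ := fun _ : Fin d => ℝ) i).hasFDerivAt.comp_hasDerivAt
      0 hderF
  -- vanishing of (B v₀)ᵢ for w i = 0
  have hvan : ∀ i : Fin d, w i = 0 → B.mulVec v₀ i = 0 := by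
    intro i hi
    simp only [Matrix.mulVec, dotProduct]
    refine Finset.sum_eq_zero fun j _ => ?_
    by_cases hb : B i j = 0
    · simp [hb]
    · exact absurd (hB i j hb ▸ hi) (Nat.succ_ne_zero _)
  have hF0 : ∀ i, F 0 i = v₀ i := by
    intro i
    simp only [hF, hv₀, vB, flowY]
    norm_num
  -- derivative of each piece
  have hsum1 : HasDerivAt (fun δ : ℝ =>
      ∑ i : Fin d, if w i = 0 then Dxop i u ζ * F δ i else 0) 0 0 := by
    have : HasDerivAt (fun δ : ℝ =>
        ∑ i : Fin d, if w i = 0 then Dxop i u ζ * F δ i else 0)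
        (∑ i : Fin d, (0 : ℝ)) 0 := by
      refine HasDerivAt.fun_sum fun i _ => ?_
      by_cases hi : w i = 0
      · simp only [if_pos hi]
        have := (hFi i).const_mul (Dxop i u ζ)
        rwa [hvan i hi, mul_zero] at this
      · simp only [if_neg hi]
        exact hasDerivAt_const _ _
    simpa using this
  have hsum2 : HasDerivAt (fun δ : ℝ => (1 / 2 : ℝ) *
      ∑ i : Fin d, ∑ j : Fin d,
        if w i = 0 ∧ w j = 0 then Dxop i (Dxop j u) ζ * F δ i * F δ j else 0) 0 0 := by
    have : HasDerivAt (fun δ : ℝ =>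
        ∑ i : Fin d, ∑ j : Fin d,
          if w i = 0 ∧ w j = 0 then Dxop i (Dxop j u) ζ * F δ i * F δ j else 0)
        (∑ i : Fin d, ∑ j : Fin d, (0 : ℝ)) 0 := by
      refine HasDerivAt.fun_sum fun i _ => HasDerivAt.fun_sum fun j _ => ?_
      by_cases hij : w i = 0 ∧ w j = 0
      · simp only [if_pos hij]
        have h := (((hFi i).const_mul (Dxop i (Dxop j u) ζ)).fun_mul (hFi j))
        rw [hvan i hij.1, hvan j hij.2] at h
        simpa using h
      · simp only [if_neg hij]
        exact hasDerivAt_const _ _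
    have h2 := this.const_mul (1 / 2 : ℝ)
    simpa using h2
  have hlast : HasDerivAt (fun δ : ℝ => Yop B u ζ * (z.1 + δ - ζ.1)) (Yop B u ζ) 0 := by
    have : HasDerivAt (fun δ : ℝ => z.1 + δ - ζ.1) 1 0 :=
      ((hasDerivAt_id 0).const_add z.1).sub_const ζ.1
    have := this.const_mul (Yop B u ζ)
    simpa using this
  have htot : HasDerivAt (fun δ : ℝ => T2 w B u ζ (flowY B δ z)) (Yop B u ζ) 0 := by
    have h := (((hasDerivAt_const (0 : ℝ) (u ζ)).add hsum1).add hsum2).add hlast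
    have heq : (fun δ : ℝ => T2 w B u ζ (flowY B δ z)) =
        fun δ : ℝ => (u ζ + (∑ i : Fin d, if w i = 0 then Dxop i u ζ * F δ i else 0)
          + (1 / 2 : ℝ) * ∑ i : Fin d, ∑ j : Fin d,
              if w i = 0 ∧ w j = 0 then Dxop i (Dxop j u) ζ * F δ i * F δ j else 0)
          + Yop B u ζ * (z.1 + δ - ζ.1) := by
      funext δ
      simp only [T2, hF, flowY]
    rw [heq]
    simp only [zero_add] at h
    exact h
  exact htot.deriv
end
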